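/- Let G ~ G(n+k, 1/2) be a uniformly random graph with vertex set {v₁,…,v_n} ⊔ U where |U| = k. For J = {i₁ < ⋯ < i_s} ⊆ [n], define G_J := G*v_{i₁}*v_{i₂}*⋯*v_{i_s}. Then for all J, J′ ⊆ [n], the random graphs G_J[U] and (G_J △ G_{J′})[U] are independent, where G_J △ G_{J′} is the graph on V(G) with edge set E(G_J)△E(G_{J′}). -/

import Mathlib

/-!
Adding (by symmetric difference) a graph `S` on `U` to `G` commutes with local complementation
at every `v_i`, since no `v_i` has a neighbour in `S`. So it shifts `G_J[U]` by `S` and leaves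
`G_J △ G_{J'}` unchanged. These shifts move any value of `G_J[U]` to any other while preserving
`(G_J △ G_{J'})[U]`, so all fibres of `(G_J[U], (G_J △ G_{J'})[U])` over a fixed second
coordinate have the same size, which is independence under the uniform measure.
-/

open Finset

variable {V : Type*}

/-- Local complementation at `v`: complement the induced subgraph on the
neighborhood of `v`. -/
def localComp (G : SimpleGraph V) (v : V) : SimpleGraph V where
  Adj u w := (G.Adj v u ∧ G.Adj v w ∧ u ≠ w ∧ ¬ G.Adj u w) ∨
    (¬ (G.Adj v u ∧ G.Adj v w) ∧ G.Adj u w)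
  symm := by
    constructor
    intro u w h
    rcases h with ⟨h1, h2, h3, h4⟩ | ⟨h1, h2⟩
    · exact Or.inl ⟨h2, h1, h3.symm, fun a => h4 a.symm⟩
    · exact Or.inr ⟨fun hc => h1 ⟨hc.2, hc.1⟩, h2.symm⟩
  loopless := by
    constructor
    rintro u (⟨-, -, h, -⟩ | ⟨-, h⟩)
    · exact h rfl
    · exact G.loopless.irrefl u h

/-- Pivot at an edge `uv`: `G × uv = G * u * v * u`. -/
def pivotGraph (G : SimpleGraph V) (u v : V) : SimpleGraph V :=
  localComp (localComp (localComp G u) v) u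

/-- Delete a vertex from a graph. -/
def deleteVertex (G : SimpleGraph V) (v : V) : SimpleGraph V where
  Adj a b := G.Adj a b ∧ a ≠ v ∧ b ≠ v
  symm := ⟨fun _ _ h => ⟨h.1.symm, h.2.2, h.2.1⟩⟩
  loopless := ⟨fun a h => G.loopless.irrefl a h.1⟩

/-- `G_J := G * v_{i₁} * v_{i₂} * ⋯ * v_{i_s}` where
`J = {i₁ < ⋯ < i_s} ⊆ [n]` and `v_i` are the `Fin n`-vertices. -/
def GJ {n k : ℕ} (G : SimpleGraph (Fin n ⊕ Fin k)) (J : Finset (Fin n)) :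
    SimpleGraph (Fin n ⊕ Fin k) :=
  (J.sort (· ≤ ·)).foldl (fun g i => localComp g (Sum.inl i)) G

/-- `G △ H`: the graph whose edge set is the symmetric difference of the edge
sets of `G` and `H`. -/
def gSymmDiff {W : Type*} (G H : SimpleGraph W) : SimpleGraph W where
  Adj a b := (G.Adj a b ∧ ¬ H.Adj a b) ∨ (H.Adj a b ∧ ¬ G.Adj a b)
  symm := by
    constructor
    rintro a b (⟨h1, h2⟩ | ⟨h1, h2⟩)
    · exact Or.inl ⟨h1.symm, fun hc => h2 hc.symm⟩
    · exact Or.inr ⟨h1.symm, fun hc => h2 hc.symm⟩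
  loopless := by
    constructor
    rintro a (⟨h1, -⟩ | ⟨h1, -⟩)
    · exact G.loopless.irrefl a h1
    · exact H.loopless.irrefl a h1

/-- The induced graph on `U` (the `Fin k`-vertices). -/
def indU {n k : ℕ} (G : SimpleGraph (Fin n ⊕ Fin k)) : SimpleGraph (Fin k) where
  Adj a b := G.Adj (Sum.inr a) (Sum.inr b)
  symm := ⟨fun _ _ h => G.symm.symm _ _ h⟩
  loopless := ⟨fun a h => G.loopless.irrefl _ h⟩

open scoped symmDiff

theorem Nat.card_eq_card_mul_of_card_fiber_eq {α β : Type*} [Finite α] [Finite β] (f : α → β)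
    {m : ℕ} (hf : ∀ b, Nat.card {a // f a = b} = m) : Nat.card α = Nat.card β * m := by
  have := Fintype.ofFinite β
  rw [← Nat.card_congr (Equiv.sigmaFiberEquiv f), Nat.card_sigma, Finset.sum_congr rfl
    fun b _ => hf b, Finset.sum_const, Finset.card_univ, smul_eq_mul, Nat.card_eq_fintype_card]

section Shift

variable {Ω α β : Type*} [Finite Ω] [Finite α] (X : Ω → α) (Y : Ω → β)

theorem card_and_mul_card_eq_of_shift
    (hshift : ∀ s s', ∃ e : Ω ≃ Ω, (∀ ω, X ω = s ↔ X (e ω) = s') ∧ ∀ ω, Y (e ω) = Y ω)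
    (s : α) (t : β) :
    Nat.card {ω // X ω = s ∧ Y ω = t} * Nat.card Ω =
      Nat.card {ω // X ω = s} * Nat.card {ω // Y ω = t} := by
  have hfiber : ∀ s', Nat.card {ω // X ω = s'} = Nat.card {ω // X ω = s} ∧
      Nat.card {ω // X ω = s' ∧ Y ω = t} = Nat.card {ω // X ω = s ∧ Y ω = t} := by
    intro s'
    obtain ⟨e, hX, hY⟩ := hshift s s'
    exact ⟨(Nat.card_congr (e.subtypeEquiv hX)).symm,
      (Nat.card_congr (e.subtypeEquiv fun ω => by rw [hX, hY])).symm⟩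
  have hΩ := Nat.card_eq_card_mul_of_card_fiber_eq X fun s' => (hfiber s').1
  have hY := Nat.card_eq_card_mul_of_card_fiber_eq (fun ω : {ω // Y ω = t} => X ω) fun s' =>
    (Nat.card_congr ((Equiv.subtypeSubtypeEquivSubtypeInter _ _).trans
      (Equiv.subtypeEquivRight fun _ => and_comm))).trans (hfiber s').2
  rw [hΩ, hY]
  ring

theorem card_and_div_card_eq_mul_of_shift
    (hshift : ∀ s s', ∃ e : Ω ≃ Ω, (∀ ω, X ω = s ↔ X (e ω) = s') ∧ ∀ ω, Y (e ω) = Y ω)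
    (s : α) (t : β) :
    (Nat.card {ω // X ω = s ∧ Y ω = t} : ℝ) / Nat.card Ω =
      Nat.card {ω // X ω = s} / Nat.card Ω * (Nat.card {ω // Y ω = t} / Nat.card Ω) := by
  rcases (Nat.card Ω).eq_zero_or_pos with hΩ | hΩ
  · simp [hΩ]
  have := congrArg (Nat.cast : ℕ → ℝ) (card_and_mul_card_eq_of_shift X Y hshift s t)
  push_cast at this
  field_simp
  linarith

end Shift

theorem gSymmDiff_eq_symmDiff {W : Type*} (G H : SimpleGraph W) : gSymmDiff G H = G ∆ H := by
  ext a b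
  simp [gSymmDiff, symmDiff_def]

theorem localComp_symmDiff_of_forall_not_adj (G H : SimpleGraph V) {v : V}
    (hv : ∀ u, ¬ H.Adj v u) : localComp (G ∆ H) v = localComp G v ∆ H := by
  ext a b
  have hG : a = b → ¬ G.Adj a b := fun h => h ▸ G.irrefl
  have hH : a = b → ¬ H.Adj a b := fun h => h ▸ H.irrefl
  simp only [localComp, symmDiff_def, SimpleGraph.sup_adj, SimpleGraph.sdiff_adj, hv]
  tauto

theorem foldl_localComp_symmDiff_of_forall_not_adj {ι : Type*} (f : ι → V) (H : SimpleGraph V)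
    (hH : ∀ i u, ¬ H.Adj (f i) u) (l : List ι) (G : SimpleGraph V) :
    l.foldl (fun g i => localComp g (f i)) (G ∆ H) =
      l.foldl (fun g i => localComp g (f i)) G ∆ H := by
  induction l generalizing G with
  | nil => rfl
  | cons i l ih =>
    simp only [List.foldl_cons, localComp_symmDiff_of_forall_not_adj G H (hH i)]
    exact ih _

section Sum

variable {n k : ℕ}

theorem GJ_symmDiff_map_inr (G : SimpleGraph (Fin n ⊕ Fin k)) (S : SimpleGraph (Fin k))
    (J : Finset (Fin n)) :
    GJ (G ∆ S.map Function.Embedding.inr) J = GJ G J ∆ S.map Function.Embedding.inr :=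
  foldl_localComp_symmDiff_of_forall_not_adj _ _ (by simp [SimpleGraph.map_adj]) _ G

theorem indU_symmDiff (G H : SimpleGraph (Fin n ⊕ Fin k)) : indU (G ∆ H) = indU G ∆ indU H := by
  ext a b
  simp [indU, symmDiff_def]

theorem indU_map_inr (S : SimpleGraph (Fin k)) :
    indU (S.map (Function.Embedding.inr : Fin k ↪ Fin n ⊕ Fin k)) = S :=
  SimpleGraph.comap_map_eq Function.Embedding.inr S

theorem indU_GJ_symmDiff_map_inr (G : SimpleGraph (Fin n ⊕ Fin k)) (S : SimpleGraph (Fin k))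
    (J : Finset (Fin n)) :
    indU (GJ (G ∆ S.map Function.Embedding.inr) J) = indU (GJ G J) ∆ S := by
  rw [GJ_symmDiff_map_inr, indU_symmDiff, indU_map_inr]

theorem GJ_symmDiff_GJ_symmDiff_map_inr (G : SimpleGraph (Fin n ⊕ Fin k))
    (S : SimpleGraph (Fin k)) (J J' : Finset (Fin n)) :
    GJ (G ∆ S.map Function.Embedding.inr) J ∆ GJ (G ∆ S.map Function.Embedding.inr) J' =
      GJ G J ∆ GJ G J' := by
  rw [GJ_symmDiff_map_inr, GJ_symmDiff_map_inr, symmDiff_symmDiff_symmDiff_comm, symmDiff_self,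
    symmDiff_bot]

end Sum

/-- Let `G ~ G(n+k, 1/2)` with vertex set `{v₁,…,v_n} ⊔ U`, `|U| = k`. For all
`J, J′ ⊆ [n]`, the random graphs `G_J[U]` and `(G_J △ G_{J′})[U]` are
independent. -/
theorem GJ_symmdiff_independent (n k : ℕ) (J J' : Finset (Fin n))
    (H₁ H₂ : SimpleGraph (Fin k)) :
    (Nat.card {G : SimpleGraph (Fin n ⊕ Fin k) //
        indU (GJ G J) = H₁ ∧ indU (gSymmDiff (GJ G J) (GJ G J')) = H₂} : ℝ) /
      (Nat.card (SimpleGraph (Fin n ⊕ Fin k)) : ℝ)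
    = (Nat.card {G : SimpleGraph (Fin n ⊕ Fin k) // indU (GJ G J) = H₁} : ℝ) /
        (Nat.card (SimpleGraph (Fin n ⊕ Fin k)) : ℝ) *
      ((Nat.card {G : SimpleGraph (Fin n ⊕ Fin k) //
          indU (gSymmDiff (GJ G J) (GJ G J')) = H₂} : ℝ) /
        (Nat.card (SimpleGraph (Fin n ⊕ Fin k)) : ℝ)) := by
  refine card_and_div_card_eq_mul_of_shift (fun G => indU (GJ G J))
    (fun G => indU (gSymmDiff (GJ G J) (GJ G J'))) (fun s s' => ?_) H₁ H₂
  refine ⟨(symmDiff_left_involutive ((s ∆ s').map Function.Embedding.inr)).toPerm,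
    fun G => ?_, fun G => ?_⟩
  · rw [Function.Involutive.coe_toPerm, indU_GJ_symmDiff_map_inr,
      ← symmDiff_left_inj (b := s ∆ s'), symmDiff_symmDiff_cancel_left]
  · rw [Function.Involutive.coe_toPerm, gSymmDiff_eq_symmDiff, gSymmDiff_eq_symmDiff,
      GJ_symmDiff_GJ_symmDiff_map_inr]
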